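/- arXiv:1301.1248 — 3 statements merged into one kernel-verified Lean document; each statement's English description precedes it below -/
import Mathlib

section
/- Let G be a finite abelian group of order n over the complex numbers. The determinant of the group matrix A_G = (X_{τ⁻¹σ})_{τ,σ∈G} equals the product over all characters χ of G of the linear forms Σ_{σ∈G} χ(σ) X_σ: det A_G = Π_{χ∈Ĝ} Σ_{σ∈G} χ(σ) X_σ. -/
/-!
Each character `χ`, viewed as the column vector `(χ τ)_τ`, is an eigenvector of the group matrix
with eigenvalue `∑ σ, χ σ • X σ`, because `∑ σ, X (τ⁻¹ σ) χ σ = χ τ ∑ σ, X σ χ σ`. A finite abelian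
group has as many characters as elements, and by orthogonality of characters the square matrix of
their values is invertible as soon as `|G|` is invertible in the coefficient field; it therefore
diagonalizes the group matrix.
-/

open Finset Matrix

section

variable {G : Type*} [CommGroup G] [Fintype G]

open scoped Classical in
theorem MonoidHom.sum_inv_apply_mul_apply {K : Type*} [CommRing K] [IsDomain K]
    (χ ψ : G →* Kˣ) :
    ∑ τ, (χ τ⁻¹ : K) * ψ τ = if χ = ψ then (Fintype.card G : K) else 0 := by
  have hcoe : ((Units.coeHom K).comp (χ⁻¹ * ψ) = 1) ↔ χ = ψ := by
    rw [← inv_mul_eq_one (a := χ), MonoidHom.ext_iff, MonoidHom.ext_iff]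
    simp only [MonoidHom.comp_apply, Units.coeHom_apply, MonoidHom.one_apply, Units.val_eq_one]
  simpa [hcoe] using sum_hom_units ((Units.coeHom K).comp (χ⁻¹ * ψ))

variable {K : Type*}

def charMatrix [Monoid K] {ι : Type*} (χ : ι → G →* Kˣ) : Matrix G ι K :=
  of fun τ i => χ i τ

theorem charMatrix_inv_transpose_mul [CommRing K] [IsDomain K] {ι : Type*} [DecidableEq ι]
    {χ : ι → G →* Kˣ} (hχ : Function.Injective χ) :
    (charMatrix fun i => (χ i)⁻¹)ᵀ * charMatrix χ = (Fintype.card G : K) • 1 := by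
  ext i j
  simp only [mul_apply, transpose_apply, charMatrix, of_apply, MonoidHom.inv_apply, ← map_inv,
    MonoidHom.sum_inv_apply_mul_apply, hχ.eq_iff, Matrix.smul_apply, one_apply]
  split_ifs <;> simp

theorem isUnit_det_charMatrix [Field K] [NeZero (Fintype.card G : K)] [DecidableEq G]
    {χ : G → G →* Kˣ} (hχ : Function.Injective χ) : IsUnit (charMatrix χ).det := by
  refine isUnit_det_of_left_inverse
    (B := (Fintype.card G : K)⁻¹ • (charMatrix fun i => (χ i)⁻¹)ᵀ) ?_
  rw [smul_mul_assoc, charMatrix_inv_transpose_mul hχ, smul_smul,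
    inv_mul_cancel₀ (NeZero.ne _), one_smul]

def groupMatrix {A : Type*} (X : G → A) : Matrix G G A := of fun τ σ => X (τ⁻¹ * σ)

theorem groupMatrix_mul_charMatrix [CommRing K] {A : Type*} [CommRing A] [Algebra K A]
    {ι : Type*} [Fintype ι] [DecidableEq ι] (X : G → A) (χ : ι → G →* Kˣ) :
    groupMatrix X * (charMatrix χ).map (algebraMap K A) =
      (charMatrix χ).map (algebraMap K A) * diagonal fun i => ∑ σ, (χ i σ : K) • X σ := by
  ext τ i
  rw [mul_diagonal, mul_apply, ← Equiv.sum_comp (Equiv.mulLeft τ), mul_sum]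
  simp only [groupMatrix, charMatrix, map_apply, of_apply, Algebra.smul_def]
  refine sum_congr rfl fun σ _ => ?_
  simp only [Equiv.coe_mulLeft, inv_mul_cancel_left, map_mul, Units.val_mul]
  ring

theorem Matrix.det_eq_prod_of_mul_eq_mul_diagonal {n R : Type*} [Fintype n] [DecidableEq n]
    [CommRing R] {M P : Matrix n n R} {d : n → R} (h : M * P = P * diagonal d)
    (hP : IsUnit P.det) : M.det = ∏ i, d i := by
  have := congrArg det h
  rw [det_mul, det_mul, det_diagonal, mul_comm] at this
  exact hP.mul_left_cancel this

theorem det_groupMatrix [Field K] [NeZero (Fintype.card G : K)]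
    [HasEnoughRootsOfUnity K (Monoid.exponent G)] [DecidableEq G] [Fintype (G →* Kˣ)]
    {A : Type*} [CommRing A] [Algebra K A] (X : G → A) :
    (groupMatrix X).det = ∏ χ : G →* Kˣ, ∑ σ, (χ σ : K) • X σ := by
  obtain ⟨e⟩ := CommGroup.monoidHom_mulEquiv_of_hasEnoughRootsOfUnity G K
  have hV : IsUnit ((charMatrix e.symm).map (algebraMap K A)).det := by
    rw [← RingHom.mapMatrix_apply, ← RingHom.map_det]
    exact (isUnit_det_charMatrix e.symm.injective).map _
  rw [det_eq_prod_of_mul_eq_mul_diagonal (groupMatrix_mul_charMatrix X _) hV]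
  exact e.symm.prod_comp fun χ => ∑ σ, (χ σ : K) • X σ

end

/-- The group determinant factors into the product of the linear forms
`Y_χ = ∑ σ, χ(σ) X_σ` over all characters `χ` of the finite abelian group `G`. -/
theorem group_determinant_factorization
    (G : Type*) [CommGroup G] [Fintype G] [DecidableEq G]
    [Fintype (G →* ℂˣ)]
    (A : Type*) [CommRing A] [Algebra ℂ A]
    (X : G → A) :
    (Matrix.of fun τ σ : G => X (τ⁻¹ * σ)).det
      = ∏ χ : G →* ℂˣ, ∑ σ : G, ((χ σ : ℂ)) • X σ :=
  det_groupMatrix X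
end

section
/- Let ζ be a primitive n-th root of unity in a field F. The determinant of the matrix P = (ζ^{ij})_{0≤i,j≤n−1} equals n times the determinant of the (n−1)×(n−1) matrix (ζ^{ij})_{1≤i,j≤n−1}. -/
/-!
Adding all other columns of `P = (ζ^{ij})` to its first column does not change the determinant.
Row `i` of `P` sums to `∑_j (ζ^i)^j`, which is `n` for `i = 0` and `0` otherwise, since `ζ^i ≠ 1` is
then a root of `X^n - 1 = (X - 1)(1 + X + ⋯ + X^{n-1})`. So the new first column is `(n, 0, …, 0)`,
and Laplace expansion along it leaves `n` times the minor.
-/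

open Finset Matrix

theorem geom_sum_eq_zero_of_pow_eq_one {R : Type*} [CommRing R] [IsDomain R] {ω : R} {n : ℕ}
    (hω : ω ^ n = 1) (hω₁ : ω ≠ 1) : ∑ i ∈ range n, ω ^ i = 0 :=
  eq_zero_of_ne_zero_of_mul_left_eq_zero (sub_ne_zero_of_ne hω₁.symm)
    (by rw [mul_neg_geom_sum, hω, sub_self])

theorem IsPrimitiveRoot.sum_pow_mul_eq_ite {R : Type*} [CommRing R] [IsDomain R] {ζ : R} {n : ℕ}
    (hζ : IsPrimitiveRoot ζ n) (i : ℕ) :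
    ∑ j ∈ range n, ζ ^ (i * j) = if n ∣ i then (n : R) else 0 := by
  simp_rw [pow_mul]
  split_ifs with hi
  · simp [(hζ.pow_eq_one_iff_dvd i).mpr hi]
  · refine geom_sum_eq_zero_of_pow_eq_one ?_ (mt (hζ.pow_eq_one_iff_dvd i).mp hi)
    rw [← pow_mul, mul_comm, pow_mul, hζ.pow_eq_one, one_pow]

theorem Matrix.det_eq_mul_det_submatrix_succ_of_row_sums {R : Type*} [CommRing R] {m : ℕ}
    (M : Matrix (Fin (m + 1)) (Fin (m + 1)) R) {c : R}
    (hM : ∀ i, ∑ j, M i j = if i = 0 then c else 0) :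
    M.det = c * (M.submatrix Fin.succ Fin.succ).det := by
  have hdet : (M.updateCol 0 fun i => ∑ j, M i j).det = M.det := by
    simpa using M.det_updateCol_sum 0 1
  rw [← hdet, det_succ_column _ 0, Fintype.sum_eq_single 0 fun i hi => by simp [hM, hi],
    submatrix_updateCol_succAbove, updateCol_self, hM]
  simp

theorem det_eq_n_mul_minor_det_general
    (F : Type*) [Field F] (n : ℕ) (hn : 1 ≤ n)
    (ζ : F) (hζ : IsPrimitiveRoot ζ n) :
    (Matrix.of fun i j : Fin n => ζ ^ ((i : ℕ) * (j : ℕ))).det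
      = (n : F) *
        (Matrix.of fun i j : Fin (n - 1) =>
          ζ ^ (((i : ℕ) + 1) * ((j : ℕ) + 1))).det := by
  obtain ⟨m, rfl⟩ : ∃ m, n = m + 1 := ⟨n - 1, by omega⟩
  refine det_eq_mul_det_submatrix_succ_of_row_sums _ fun i => ?_
  have hdvd : m + 1 ∣ (i : ℕ) ↔ i = 0 := by
    rw [Nat.dvd_iff_mod_eq_zero, Nat.mod_eq_of_lt i.is_lt, Fin.val_eq_zero_iff]
  simp only [of_apply, Fin.sum_univ_eq_sum_range (fun j => ζ ^ ((i : ℕ) * j)),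
    hζ.sum_pow_mul_eq_ite, hdvd]

/-- `det (ζ^{ij})_{0 ≤ i,j ≤ n-1} = n ⬝ det (ζ^{ij})_{1 ≤ i,j ≤ n-1}`. -/
theorem det_eq_n_mul_minor_det
    (F : Type*) [Field F] (n : ℕ) (hn : 1 ≤ n) (hchar : (n : F) ≠ 0)
    (ζ : F) (hζ : IsPrimitiveRoot ζ n) :
    (Matrix.of fun i j : Fin n => ζ ^ ((i : ℕ) * (j : ℕ))).det
      = (n : F) *
        (Matrix.of fun i j : Fin (n - 1) =>
          ζ ^ (((i : ℕ) + 1) * ((j : ℕ) + 1))).det :=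
  det_eq_n_mul_minor_det_general F n hn ζ hζ
end

section
/- Blahut-type theorem for finite abelian groups: let G be a finite abelian group of order n, F a field containing a primitive n-th root of unity (char F ∤ n), b ∈ F^G, and B = F(b) ∈ F^{Ĝ} its finite Fourier transform B_χ = Σ_σ χ(σ) b_σ. Then the Hamming weight of b (the number of σ ∈ G with b_σ ≠ 0) equals the rank of the n×n matrix M̂(B) = (B_{ψ⁻¹χ})_{χ,ψ∈Ĝ}. -/
/-!
Write `A = (χ σ)_{χ,σ}` for the character table of `G` and `C = (χ σ⁻¹)_{σ,χ}`. Unfolding the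
Fourier transform gives the factorization `M̂(B) = A · diag(b) · C`, and the orthogonality of
characters reads `C · A = n · 1`. Since `n` is invertible in `F`, the matrix `A` has a left
inverse and `C` a right inverse, so multiplying by them does not change the rank; and the rank of
`diag(b)` is the number of nonzero entries of `b`.
-/

open Matrix CommGroup

namespace Matrix

variable {l m n o R : Type*} [Fintype l] [Fintype m] [Fintype n] [Fintype o]
  [DecidableEq m] [DecidableEq n] [CommRing R] [StrongRankCondition R]

theorem rank_mul_mul_eq_of_mul_eq_smul_one {c : R} (hc : c ∈ nonZeroDivisors R)
    {P : Matrix l m R} {P' : Matrix m l R} (hP : P' * P = c • 1)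
    {Q : Matrix n o R} {Q' : Matrix o n R} (hQ : Q * Q' = c • 1) (X : Matrix m n R) :
    (P * X * Q).rank = X.rank := by
  refine le_antisymm ((rank_mul_le_left _ _).trans (rank_mul_le_right _ _)) ?_
  calc X.rank = (c • c • X).rank := by
        rw [rank_smul_of_mem_nonZeroDivisors _ hc, rank_smul_of_mem_nonZeroDivisors _ hc]
    _ = (P' * (P * X * Q) * Q').rank := by
        simp only [← Matrix.mul_assoc, hP, Matrix.smul_mul, Matrix.one_mul, Matrix.mul_assoc X, hQ,
          Matrix.mul_smul, Matrix.mul_one]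
    _ ≤ (P * X * Q).rank := (rank_mul_le_left _ _).trans (rank_mul_le_right _ _)

end Matrix

namespace CommGroup

variable (G R : Type*) [CommGroup G] [CommRing R]

theorem sum_monoidHom_units_apply [Fintype G] [DecidableEq G] [IsDomain R] [Fintype (G →* Rˣ)]
    [HasEnoughRootsOfUnity R (Monoid.exponent G)] (g : G) :
    ∑ χ : G →* Rˣ, (χ g : R) = if g = 1 then (Fintype.card G : R) else 0 := by
  classical
  have hsum := sum_hom_units ((Units.coeHom R).comp (MonoidHom.eval g))
  have heval : (Units.coeHom R).comp (MonoidHom.eval g) = 1 ↔ g = 1 := by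
    simp [MonoidHom.ext_iff, ← forall_apply_eq_apply_iff G (M := R) (g := g)]
  simpa [heval, ← Nat.card_eq_fintype_card, card_monoidHom_of_hasEnoughRootsOfUnity] using hsum

def characterMatrix : Matrix (G →* Rˣ) G R := fun χ σ => χ σ

def inverseCharacterMatrix : Matrix G (G →* Rˣ) R := fun σ χ => χ σ⁻¹

theorem characterMatrix_mul_diagonal_mul_inverseCharacterMatrix_apply [Fintype G]
    [DecidableEq G] (b : G → R) (χ ψ : G →* Rˣ) :
    (characterMatrix G R * diagonal b * inverseCharacterMatrix G R) χ ψ =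
      ∑ σ : G, ((ψ⁻¹ * χ) σ : R) * b σ := by
  rw [mul_apply]
  simp only [mul_diagonal, characterMatrix, inverseCharacterMatrix, MonoidHom.mul_apply,
    MonoidHom.inv_apply, map_inv, Units.val_mul]
  exact Finset.sum_congr rfl fun σ _ => by ring

theorem inverseCharacterMatrix_mul_characterMatrix [Fintype G] [DecidableEq G] [IsDomain R]
    [Fintype (G →* Rˣ)] [HasEnoughRootsOfUnity R (Monoid.exponent G)] :
    inverseCharacterMatrix G R * characterMatrix G R = (Fintype.card G : R) • 1 := by
  ext σ τ
  simp only [mul_apply, inverseCharacterMatrix, characterMatrix, ← Units.val_mul, ← map_mul,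
    sum_monoidHom_units_apply, inv_mul_eq_one, Matrix.smul_apply, one_apply, smul_eq_mul,
    mul_ite, mul_one, mul_zero]

end CommGroup

/-- Blahut-type theorem: the Hamming weight of `b ∈ F^G` equals the rank of the
matrix `M̂(B) = (B_{ψ⁻¹χ})_{χ,ψ}`, where `B` is the finite Fourier transform of `b`. -/
theorem blahut_hamming_weight_eq_rank
    (F : Type*) [Field F] (G : Type*) [CommGroup G] [Fintype G]
    [Fintype (G →* Fˣ)] [DecidableEq (G →* Fˣ)]
    (hroot : ∃ ζ : F, IsPrimitiveRoot ζ (Fintype.card G))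
    (hchar : (Fintype.card G : F) ≠ 0)
    (b : G → F) [DecidablePred fun σ : G => b σ ≠ 0] (B : (G →* Fˣ) → F)
    (hB : ∀ χ : G →* Fˣ, B χ = ∑ σ : G, (χ σ : F) * b σ)
    (M : Matrix (G →* Fˣ) (G →* Fˣ) F)
    (hM : ∀ χ ψ : G →* Fˣ, M χ ψ = B (ψ⁻¹ * χ)) :
    (Finset.univ.filter fun σ : G => b σ ≠ 0).card = M.rank := by
  classical
  have : NeZero (Fintype.card G) := ⟨Fintype.card_ne_zero⟩
  have : HasEnoughRootsOfUnity F (Fintype.card G) := ⟨hroot, inferInstance⟩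
  have : HasEnoughRootsOfUnity F (Monoid.exponent G) :=
    HasEnoughRootsOfUnity.of_dvd F Group.exponent_dvd_card
  have hfactor : M = characterMatrix G F * diagonal b * inverseCharacterMatrix G F := by
    ext χ ψ
    rw [hM, hB, characterMatrix_mul_diagonal_mul_inverseCharacterMatrix_apply]
  have horth := inverseCharacterMatrix_mul_characterMatrix G F
  rw [hfactor,
    rank_mul_mul_eq_of_mul_eq_smul_one (mem_nonZeroDivisors_of_ne_zero hchar) horth horth,
    rank_diagonal, Fintype.card_subtype]
end
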